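/- arXiv:1006.0301 — 5 statements merged into one kernel-verified Lean document; each statement's English description precedes it below -/
import Mathlib

section
/- Let N ≥ 1 and let S be an N×N complex matrix with Sᵀ = S and S² = 1. Let P be an N×N complex matrix with P² = P, set P̄ := S·Pᵀ·S, and assume P·P̄ = P̄·P = 0. Then for every nonzero c ∈ ℂ, the dressing factor u = 1 + (c−1)P + (c⁻¹−1)P̄ satisfies uᵀ·S·u = S; i.e., u belongs to the complex orthogonal group defined by the bilinear form S. -/
open Matrix

/-- If `Sᵀ = S`, `S² = 1`, `P` is idempotent, `P̄ = S Pᵀ S` and `P`, `P̄`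
annihilate each other, then for every `c ≠ 0` the dressing factor
`u = 1 + (c−1)P + (c⁻¹−1)P̄` satisfies `uᵀ S u = S`. -/
theorem dressing_factor_orthogonal (N : ℕ) (hN : 1 ≤ N)
    (S : Matrix (Fin N) (Fin N) ℂ) (hSsymm : Sᵀ = S) (hSsq : S * S = 1)
    (P : Matrix (Fin N) (Fin N) ℂ) (hP : P * P = P)
    (hPPbar : P * (S * Pᵀ * S) = 0) (hPbarP : (S * Pᵀ * S) * P = 0)
    (c : ℂ) (hc : c ≠ 0) :
    (1 + (c - 1) • P + (c⁻¹ - 1) • (S * Pᵀ * S))ᵀ * S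
        * (1 + (c - 1) • P + (c⁻¹ - 1) • (S * Pᵀ * S)) = S := by
  set Q := S * Pᵀ * S with hQ
  have hQsq : Q * Q = Q := by
    rw [hQ]
    calc S * Pᵀ * S * (S * Pᵀ * S) = S * (Pᵀ * (S * S) * Pᵀ) * S := by noncomm_ring
    _ = S * Pᵀ * S := by rw [hSsq]; simp [← Matrix.transpose_mul, hP, Matrix.mul_assoc]
  have hQT : Qᵀ = S * P * S := by
    rw [hQ]; simp [Matrix.transpose_mul, hSsymm, Matrix.mul_assoc]
  have hPTS : Pᵀ * S = S * Q := by
    rw [hQ, ← Matrix.mul_assoc, ← Matrix.mul_assoc, hSsq, Matrix.one_mul]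
  have hSPS : S * P * S * S = S * P := by
    rw [Matrix.mul_assoc, hSsq, Matrix.mul_one]
  have key : ((c-1) + (c⁻¹-1) + (c-1)*(c⁻¹-1)) = 0 := by field_simp; ring
  have expand : (1 + (c - 1) • P + (c⁻¹ - 1) • Q)ᵀ * S
        * (1 + (c - 1) • P + (c⁻¹ - 1) • Q)
      = S + (((c-1) + (c⁻¹-1) + (c-1)*(c⁻¹-1)) • (S * P)
          + ((c-1) + (c⁻¹-1) + (c-1)*(c⁻¹-1)) • (S * Q)) := by
    simp only [Matrix.transpose_add, Matrix.transpose_one, Matrix.transpose_smul, hQT]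
    simp only [Matrix.add_mul, Matrix.mul_add, Matrix.smul_mul, Matrix.mul_smul,
      Matrix.one_mul, Matrix.mul_one, smul_smul]
    rw [hPTS, hSPS]
    simp only [Matrix.mul_assoc]
    rw [← Matrix.mul_assoc S Q, ← Matrix.mul_assoc S P, ← Matrix.mul_assoc S Q]
    -- now everything should be S + scalars • (S * (stuff))
    rw [Matrix.mul_assoc S Q P, hPbarP, Matrix.mul_assoc S P P, hP,
      Matrix.mul_assoc S Q Q, hQsq, hPPbar]
    simp only [Matrix.mul_zero, smul_zero, add_zero]
    module
  rw [expand, key]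
  simp
end

section
/- Let N ≥ 1, let Q₀ : ℝ → M_N(ℂ) be continuous, let J ∈ M_N(ℂ), and let λ⁺, λ⁻ ∈ ℂ. Suppose n : ℝ → ℂᴺ and m : ℝ → ℂᴺ are differentiable and satisfy i·n′(x) + (Q₀(x) − λ⁺J)·n(x) = 0 and i·(mᵀ)′(x) − m(x)ᵀ·(Q₀(x) − λ⁻J) = 0 for all x, and that m(x)ᵀ·n(x) ≠ 0 for all x. Then P(x) := (n(x)·m(x)ᵀ)/(m(x)ᵀ·n(x)) satisfies P(x)² = P(x) for all x, and solves the Riccati-type equation i·P′(x) + (Q₀(x) − λ⁺J)·P(x) − P(x)·(Q₀(x) − λ⁻J) + (λ⁺ − λ⁻)·P(x)·J·P(x) = 0 for all x ∈ ℝ. -/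
/-!
With `A = Q₀ - λ⁺J` and `B = Q₀ - λ⁻J` the two linear equations say `n' = i A n` and
`(mᵀ)' = -i mᵀ B`. For `P = n mᵀ / (mᵀ n)` the quotient rule then gives
`P' = i (A P - P B + P (B - A) P)` for arbitrary `A` and `B`: the normalisation has derivative
`(mᵀ n)' = i mᵀ (A - B) n`, and it produces the cubic term because `P M P = (mᵀ M n / mᵀ n) P`
for every matrix `M`. Finally `B - A = (λ⁺ - λ⁻) J`.
-/

open Matrix

/-- The rank-one projector built from polarization vectors `n`, `m`:
`P(x) = (n(x) m(x)ᵀ)/(m(x)ᵀ n(x))`. -/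
noncomputable def polProj (N : ℕ) (n m : ℝ → Fin N → ℂ) (x : ℝ) :
    Matrix (Fin N) (Fin N) ℂ :=
  (m x ⬝ᵥ n x)⁻¹ • vecMulVec (n x) (m x)

namespace Matrix

variable {ι R : Type*} [Fintype ι] [Field R] (u v : ι → R)

noncomputable def rankOneProj : Matrix ι ι R := (v ⬝ᵥ u)⁻¹ • vecMulVec u v

/-- The quotient-rule derivative of `rankOneProj u v` along velocities `u'` and `v'`. -/
noncomputable def rankOneProjDeriv (u' v' : ι → R) : Matrix ι ι R :=
  (v ⬝ᵥ u)⁻¹ • (vecMulVec u' v + vecMulVec u v')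
    - ((v ⬝ᵥ u)⁻¹ * (v' ⬝ᵥ u + v ⬝ᵥ u')) • rankOneProj u v

theorem mul_rankOneProj (M : Matrix ι ι R) :
    M * rankOneProj u v = (v ⬝ᵥ u)⁻¹ • vecMulVec (M *ᵥ u) v := by
  rw [rankOneProj, mul_smul_comm, mul_vecMulVec]

theorem rankOneProj_mul (M : Matrix ι ι R) :
    rankOneProj u v * M = (v ⬝ᵥ u)⁻¹ • vecMulVec u (v ᵥ* M) := by
  rw [rankOneProj, smul_mul_assoc, vecMulVec_mul]

theorem rankOneProj_mul_mul_rankOneProj (M : Matrix ι ι R) :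
    rankOneProj u v * M * rankOneProj u v
      = ((v ⬝ᵥ u)⁻¹ * (v ⬝ᵥ M *ᵥ u)) • rankOneProj u v := by
  rw [Matrix.mul_assoc, mul_rankOneProj, rankOneProj, smul_mul_assoc, mul_smul_comm,
    vecMulVec_mul_vecMulVec, vecMulVec_smul, smul_smul, smul_smul, smul_smul]
  ring_nf

variable {u v} in
theorem rankOneProj_mul_self (h : v ⬝ᵥ u ≠ 0) :
    rankOneProj u v * rankOneProj u v = rankOneProj u v := by
  rw [rankOneProj, smul_mul_smul_comm, vecMulVec_mul_vecMulVec, vecMulVec_smul, smul_smul,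
    inv_mul_cancel_right₀ h]

theorem rankOneProjDeriv_eq_riccati (A B : Matrix ι ι R) (c : R) :
    rankOneProjDeriv u v (c • (A *ᵥ u)) (-c • (v ᵥ* B))
      = c • (A * rankOneProj u v - rankOneProj u v * B
          + rankOneProj u v * (B - A) * rankOneProj u v) := by
  rw [rankOneProj_mul_mul_rankOneProj, mul_rankOneProj, rankOneProj_mul, rankOneProjDeriv]
  ext i j
  simp only [smul_vecMulVec, neg_smul, vecMulVec_neg, vecMulVec_smul, smul_add, smul_neg,
    neg_dotProduct, smul_dotProduct, smul_eq_mul, dotProduct_smul, dotProduct_mulVec, rankOneProj,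
    sub_apply, add_apply, smul_apply, vecMulVec_apply, neg_apply, sub_mulVec, dotProduct_sub]
  ring

end Matrix

namespace Complex

variable {M : Type*} [AddCommGroup M] [Module ℂ M] {a b : M}

theorem eq_I_smul_of_I_smul_add_eq_zero (h : I • a + b = 0) : a = I • b := by
  rw [eq_neg_of_add_eq_zero_right h, smul_neg, smul_smul, I_mul_I, neg_one_smul, neg_neg]

theorem eq_neg_I_smul_of_I_smul_sub_eq_zero (h : I • a - b = 0) : a = -I • b := by
  rw [← sub_eq_zero.mp h, smul_smul, neg_mul, I_mul_I, neg_neg, one_smul]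

end Complex

section Deriv

variable {ι 𝕜 𝕜' : Type*} [Fintype ι] [NontriviallyNormedField 𝕜] [NontriviallyNormedField 𝕜']
  [NormedAlgebra 𝕜 𝕜'] {u v : 𝕜 → ι → 𝕜'} {u' v' : ι → 𝕜'} {x : 𝕜}

theorem HasDerivAt.dotProduct (hu : HasDerivAt u u' x) (hv : HasDerivAt v v' x) :
    HasDerivAt (fun y => u y ⬝ᵥ v y) (u' ⬝ᵥ v x + u x ⬝ᵥ v') x := by
  simp only [_root_.dotProduct, ← Finset.sum_add_distrib]
  exact HasDerivAt.fun_sum fun k _ => (hasDerivAt_pi.mp hu k).mul (hasDerivAt_pi.mp hv k)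

theorem HasDerivAt.rankOneProj_apply (hu : HasDerivAt u u' x) (hv : HasDerivAt v v' x)
    (h : v x ⬝ᵥ u x ≠ 0) (i j : ι) :
    HasDerivAt (fun y => rankOneProj (u y) (v y) i j)
      (rankOneProjDeriv (u x) (v x) u' v' i j) x := by
  have hinv := (hasDerivAt_inv h).scomp x (hv.dotProduct hu)
  have hentry := (hasDerivAt_pi.mp hu i).fun_mul (hasDerivAt_pi.mp hv j)
  convert hinv.fun_mul hentry using 1
  · simp only [rankOneProj, Matrix.smul_apply, vecMulVec_apply, smul_eq_mul, Function.comp_apply]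
  · simp only [rankOneProjDeriv, rankOneProj, Matrix.sub_apply, Matrix.add_apply,
      Matrix.smul_apply, vecMulVec_apply, smul_eq_mul, Function.comp_apply]
    field_simp
    ring

end Deriv

theorem polProj_eq_rankOneProj (N : ℕ) (n m : ℝ → Fin N → ℂ) (x : ℝ) :
    polProj N n m x = rankOneProj (n x) (m x) :=
  rfl

theorem polarization_projector_riccati_general (N : ℕ)
    (Q₀ : ℝ → Matrix (Fin N) (Fin N) ℂ)
    (J : Matrix (Fin N) (Fin N) ℂ) (lp lm : ℂ)
    (n m n' m' : ℝ → Fin N → ℂ)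
    (hn : ∀ x, HasDerivAt n (n' x) x)
    (hm : ∀ x, HasDerivAt m (m' x) x)
    (heqn : ∀ x, Complex.I • n' x + (Q₀ x - lp • J) *ᵥ n x = 0)
    (heqm : ∀ x, Complex.I • m' x - m x ᵥ* (Q₀ x - lm • J) = 0)
    (hs : ∀ x, m x ⬝ᵥ n x ≠ 0) :
    (∀ x, polProj N n m x * polProj N n m x = polProj N n m x) ∧
    (∀ x i j, HasDerivAt (fun y => polProj N n m y i j)
      ((Complex.I • ((Q₀ x - lp • J) * polProj N n m x
          - polProj N n m x * (Q₀ x - lm • J)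
          + (lp - lm) • (polProj N n m x * J * polProj N n m x))) i j) x) := by
  simp only [polProj_eq_rankOneProj]
  refine ⟨fun x => rankOneProj_mul_self (hs x), fun x i j => ?_⟩
  have hBA : (Q₀ x - lm • J) - (Q₀ x - lp • J) = (lp - lm) • J := by
    rw [sub_sub_sub_cancel_left, sub_smul]
  have key := (hn x).rankOneProj_apply (hm x) (hs x) i j
  rw [Complex.eq_I_smul_of_I_smul_add_eq_zero (heqn x),
    Complex.eq_neg_I_smul_of_I_smul_sub_eq_zero (heqm x), rankOneProjDeriv_eq_riccati, hBA,
    Matrix.mul_smul, Matrix.smul_mul] at key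
  exact key

/-- If `n` solves `i n′ + (Q₀ − λ⁺J) n = 0`, the row vector `mᵀ` solves
`i (mᵀ)′ − mᵀ (Q₀ − λ⁻J) = 0`, and `mᵀ n` never vanishes, then
`P = (n mᵀ)/(mᵀ n)` is a projector and solves the Riccati-type equation
`i P′ + (Q₀ − λ⁺J) P − P (Q₀ − λ⁻J) + (λ⁺ − λ⁻) P J P = 0`. -/
theorem polarization_projector_riccati (N : ℕ) (hN : 1 ≤ N)
    (Q₀ : ℝ → Matrix (Fin N) (Fin N) ℂ)
    (hQ₀ : ∀ i j, Continuous fun x => Q₀ x i j)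
    (J : Matrix (Fin N) (Fin N) ℂ) (lp lm : ℂ)
    (n m n' m' : ℝ → Fin N → ℂ)
    (hn : ∀ x, HasDerivAt n (n' x) x)
    (hm : ∀ x, HasDerivAt m (m' x) x)
    (heqn : ∀ x, Complex.I • n' x + (Q₀ x - lp • J) *ᵥ n x = 0)
    (heqm : ∀ x, Complex.I • m' x - m x ᵥ* (Q₀ x - lm • J) = 0)
    (hs : ∀ x, m x ⬝ᵥ n x ≠ 0) :
    (∀ x, polProj N n m x * polProj N n m x = polProj N n m x) ∧
    (∀ x i j, HasDerivAt (fun y => polProj N n m y i j)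
      ((Complex.I • ((Q₀ x - lp • J) * polProj N n m x
          - polProj N n m x * (Q₀ x - lm • J)
          + (lp - lm) • (polProj N n m x * J * polProj N n m x))) i j) x) :=
  polarization_projector_riccati_general N Q₀ J lp lm n m n' m' hn hm heqn heqm hs
end

section
/- Let N ≥ 1, let J ∈ M_N(ℂ), let λ⁺ ≠ λ⁻ be complex numbers, and let P, P̄ ∈ M_N(ℂ) satisfy P² = P, P̄² = P̄, P·P̄ = P̄·P = 0. For λ ∈ ℂ \ {λ⁺, λ⁻} set c(λ) = (λ − λ⁺)/(λ − λ⁻) and u(λ) := 1 + (c(λ) − 1)P + (c(λ)⁻¹ − 1)P̄. Then, as |λ| → ∞, λ·(J − u(λ)·J·u(λ)⁻¹) converges to (λ⁻ − λ⁺)·(J·(P − P̄) − (P − P̄)·J). (This identifies the difference of the dressed and seed potentials: Q₁ − Q₀ = (λ⁻ − λ⁺)[J, P − P̄].) -/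
/-!
Because `u(c)⁻¹ = u(c⁻¹)`, the matrix `λ (J − u J u⁻¹)` is a polynomial without constant term in
`ε = c − 1` and `δ = c⁻¹ − 1` whose coefficients are weighted by `λ`. As `λ → ∞` we have
`ε, δ → 0` while `λ ε → λ⁻ − λ⁺` and `λ δ → λ⁺ − λ⁻`, so only the linear terms
`−λ ε (P J + J P̄) − λ δ (P̄ J + J P)` survive, and they add up to `(λ⁻ − λ⁺) [J, P − P̄]`.
-/

open Matrix Filter

/-- The dressing factor `u = 1 + (c − 1) P + (c⁻¹ − 1) P̄`. -/
noncomputable def dressU {N : ℕ} (c : ℂ) (P Pbar : Matrix (Fin N) (Fin N) ℂ) :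
    Matrix (Fin N) (Fin N) ℂ :=
  1 + (c - 1) • P + (c⁻¹ - 1) • Pbar

open Bornology Topology

section Scalar

variable {𝕜 : Type*} [NormedField 𝕜]

lemma tendsto_inv_sub_const_cobounded (b : 𝕜) :
    Tendsto (fun z : 𝕜 => (z - b)⁻¹) (cobounded 𝕜) (𝓝 0) :=
  tendsto_inv₀_cobounded.comp (tendsto_sub_const_cobounded b)

lemma tendsto_sub_div_sub_cobounded (a b : 𝕜) :
    Tendsto (fun z : 𝕜 => (z - a) / (z - b)) (cobounded 𝕜) (𝓝 1) := by
  have h : Tendsto (fun z : 𝕜 => 1 + (b - a) * (z - b)⁻¹) (cobounded 𝕜) (𝓝 1) := by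
    simpa using ((tendsto_inv_sub_const_cobounded b).const_mul (b - a)).const_add 1
  refine h.congr' ?_
  filter_upwards [eventually_ne_cobounded b] with z hz
  have : z - b ≠ 0 := sub_ne_zero.mpr hz
  field_simp
  ring

lemma tendsto_mul_sub_div_sub_sub_one_cobounded (a b : 𝕜) :
    Tendsto (fun z : 𝕜 => z * ((z - a) / (z - b) - 1)) (cobounded 𝕜) (𝓝 (b - a)) := by
  have h : Tendsto (fun z : 𝕜 => (b - a) * (1 + b * (z - b)⁻¹)) (cobounded 𝕜) (𝓝 (b - a)) := by
    simpa using (((tendsto_inv_sub_const_cobounded b).const_mul b).const_add 1).const_mul (b - a)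
  refine h.congr' ?_
  filter_upwards [eventually_ne_cobounded b] with z hz
  have : z - b ≠ 0 := sub_ne_zero.mpr hz
  field_simp
  ring

end Scalar

section Dressing

variable {N : ℕ} {P Pbar : Matrix (Fin N) (Fin N) ℂ}

lemma dressU_mul_dressU_inv (hP : P * P = P) (hPbar : Pbar * Pbar = Pbar)
    (hPPbar : P * Pbar = 0) (hPbarP : Pbar * P = 0) {c : ℂ} (hc : c ≠ 0) :
    dressU c P Pbar * dressU c⁻¹ P Pbar = 1 := by
  simp only [dressU, inv_inv, add_mul, mul_add, one_mul, mul_one, Matrix.smul_mul,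
    Matrix.mul_smul, hP, hPbar, hPPbar, hPbarP, smul_smul, smul_zero]
  match_scalars <;> field_simp <;> ring

lemma inv_dressU (hP : P * P = P) (hPbar : Pbar * Pbar = Pbar)
    (hPPbar : P * Pbar = 0) (hPbarP : Pbar * P = 0) {c : ℂ} (hc : c ≠ 0) :
    (dressU c P Pbar)⁻¹ = dressU c⁻¹ P Pbar :=
  Matrix.inv_eq_right_inv (dressU_mul_dressU_inv hP hPbar hPPbar hPbarP hc)

lemma smul_sub_dressU_mul_mul_dressU_inv (s c : ℂ) (J : Matrix (Fin N) (Fin N) ℂ) :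
    s • (J - dressU c P Pbar * J * dressU c⁻¹ P Pbar) =
      -(s * (c - 1)) • (P * J + J * Pbar + (c - 1) • (P * J * Pbar) + (c⁻¹ - 1) • (P * J * P))
      - (s * (c⁻¹ - 1)) •
          (Pbar * J + J * P + (c⁻¹ - 1) • (Pbar * J * P) + (c - 1) • (Pbar * J * Pbar)) := by
  simp only [dressU, inv_inv, add_mul, mul_add, one_mul, mul_one, Matrix.smul_mul,
    Matrix.mul_smul, mul_assoc]
  module

theorem tendsto_smul_sub_dressU_conj {α : Type*} {l : Filter α} {c s : α → ℂ} {κ : ℂ}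
    (hP : P * P = P) (hPbar : Pbar * Pbar = Pbar)
    (hPPbar : P * Pbar = 0) (hPbarP : Pbar * P = 0) (J : Matrix (Fin N) (Fin N) ℂ)
    (hc : Tendsto c l (𝓝 1)) (hs : Tendsto (fun a => s a * (c a - 1)) l (𝓝 κ)) :
    Tendsto (fun a => s a • (J - dressU (c a) P Pbar * J * (dressU (c a) P Pbar)⁻¹)) l
      (𝓝 (κ • (J * (P - Pbar) - (P - Pbar) * J))) := by
  have hc0 : ∀ᶠ a in l, c a ≠ 0 := hc.eventually_ne one_ne_zero
  have hcinv : Tendsto (fun a => (c a)⁻¹) l (𝓝 1) := by simpa using hc.inv₀ one_ne_zero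
  have hε : Tendsto (fun a => c a - 1) l (𝓝 0) := by simpa using hc.sub_const 1
  have hδ : Tendsto (fun a => (c a)⁻¹ - 1) l (𝓝 0) := by simpa using hcinv.sub_const 1
  have hsδ : Tendsto (fun a => s a * ((c a)⁻¹ - 1)) l (𝓝 (-κ)) := by
    have h : Tendsto (fun a => -(s a * (c a - 1)) * (c a)⁻¹) l (𝓝 (-κ)) := by
      simpa using hs.neg.mul hcinv
    refine h.congr' ?_
    filter_upwards [hc0] with a ha
    field_simp
    ring
  have hlim := (hs.neg.smul (((tendsto_const_nhds (x := P * J + J * Pbar)).add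
      (hε.smul_const (P * J * Pbar))).add (hδ.smul_const (P * J * P)))).sub
    (hsδ.smul (((tendsto_const_nhds (x := Pbar * J + J * P)).add
      (hδ.smul_const (Pbar * J * P))).add (hε.smul_const (Pbar * J * Pbar))))
  refine (hlim.congr' ?_).trans (le_of_eq ?_)
  · filter_upwards [hc0] with a ha
    rw [inv_dressU hP hPbar hPPbar hPbarP ha, smul_sub_dressU_mul_mul_dressU_inv]
  · simp only [mul_sub, sub_mul]
    congr 1
    module

end Dressing

theorem dressed_potential_limit_general (N : ℕ)
    (J : Matrix (Fin N) (Fin N) ℂ) (lp lm : ℂ)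
    (P Pbar : Matrix (Fin N) (Fin N) ℂ)
    (hP : P * P = P) (hPbar : Pbar * Pbar = Pbar)
    (hPPbar : P * Pbar = 0) (hPbarP : Pbar * P = 0) :
    Tendsto
      (fun lam : ℂ => lam • (J - dressU ((lam - lp) / (lam - lm)) P Pbar * J
          * (dressU ((lam - lp) / (lam - lm)) P Pbar)⁻¹))
      (Bornology.cobounded ℂ)
      (nhds ((lm - lp) • (J * (P - Pbar) - (P - Pbar) * J))) :=
  tendsto_smul_sub_dressU_conj hP hPbar hPPbar hPbarP J (tendsto_sub_div_sub_cobounded lp lm)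
    (tendsto_mul_sub_div_sub_sub_one_cobounded lp lm)

/-- As `|λ| → ∞`, `λ (J − u(λ) J u(λ)⁻¹)` converges to
`(λ⁻ − λ⁺)[J, P − P̄]`, identifying the difference of dressed and seed potentials. -/
theorem dressed_potential_limit (N : ℕ) (hN : 1 ≤ N)
    (J : Matrix (Fin N) (Fin N) ℂ) (lp lm : ℂ) (hll : lp ≠ lm)
    (P Pbar : Matrix (Fin N) (Fin N) ℂ)
    (hP : P * P = P) (hPbar : Pbar * Pbar = Pbar)
    (hPPbar : P * Pbar = 0) (hPbarP : Pbar * P = 0) :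
    Tendsto
      (fun lam : ℂ => lam • (J - dressU ((lam - lp) / (lam - lm)) P Pbar * J
          * (dressU ((lam - lp) / (lam - lm)) P Pbar)⁻¹))
      (Bornology.cobounded ℂ)
      (nhds ((lm - lp) • (J * (P - Pbar) - (P - Pbar) * J))) :=
  dressed_potential_limit_general N J lp lm P Pbar hP hPbar hPPbar hPbarP
end

section
/- Let N ≥ 1, J ∈ M_N(ℂ), and let ξ be a function from ℂ to M_N(ℂ) and ξ₁ ∈ M_N(ℂ) such that λ·(ξ(λ) − 1) converges to ξ₁ as |λ| → ∞. Then ξ(λ) is invertible for all λ of sufficiently large modulus, and λ·(J − ξ(λ)·J·ξ(λ)⁻¹) converges to J·ξ₁ − ξ₁·J as |λ| → ∞. -/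
/-!
Since `λ (ξ - 1)` converges, `ξ → 1`; hence `det ξ → 1`, so `ξ` is eventually invertible and
`ξ⁻¹ → 1`. The identity `λ (J - ξ J ξ⁻¹) = (J · λ(ξ - 1) - λ(ξ - 1) · J) ξ⁻¹` then gives the limit
`[J, ξ₁]` by continuity of the ring operations.
-/

open Matrix Filter

open Bornology Topology

theorem tendsto_of_tendsto_smul_sub {𝕜 E : Type*} [NormedField 𝕜] [AddCommGroup E]
    [TopologicalSpace E] [ContinuousAdd E] [Module 𝕜 E] [ContinuousSMul 𝕜 E] {f : 𝕜 → E} {c a : E}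
    (h : Tendsto (fun z => z • (f z - c)) (cobounded 𝕜) (𝓝 a)) :
    Tendsto f (cobounded 𝕜) (𝓝 c) := by
  have hf : (fun z => z⁻¹ • (z • (f z - c)) + c) =ᶠ[cobounded 𝕜] f := by
    filter_upwards [isBounded_singleton (x := (0 : 𝕜))] with z hz
    rw [smul_smul, inv_mul_cancel₀ hz, one_smul, sub_add_cancel]
  have hlim := (tendsto_inv₀_cobounded.smul h).add_const c
  rw [zero_smul, zero_add] at hlim
  exact hlim.congr' hf

theorem smul_sub_mul_mul_eq_commutator_mul {𝕜 R : Type*} [Ring R] [DistribSMul 𝕜 R]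
    [IsScalarTower 𝕜 R R] [SMulCommClass 𝕜 R R] (c : 𝕜) {u v : R} (huv : u * v = 1) (J : R) :
    c • (J - u * J * v) = (J * c • (u - 1) - c • (u - 1) * J) * v := by
  rw [mul_smul_comm, smul_mul_assoc, ← smul_sub, smul_mul_assoc]
  congr 1
  simp only [mul_sub, sub_mul, mul_one, one_mul, mul_assoc, huv]
  abel

namespace Matrix

variable {n R : Type*} [Fintype n] [DecidableEq n] [Field R] [TopologicalSpace R]
  [IsTopologicalRing R] {α : Type*} {l : Filter α} {f : α → Matrix n n R}

theorem eventually_isUnit_of_tendsto_one [T1Space R] (hf : Tendsto f l (𝓝 1)) :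
    ∀ᶠ x in l, IsUnit (f x) := by
  have hdet : Tendsto (fun x => (f x).det) l (𝓝 1) :=
    (continuous_id.matrix_det.tendsto' 1 1 det_one).comp hf
  filter_upwards [hdet.eventually_ne one_ne_zero] with x hx
  exact (isUnit_iff_isUnit_det _).mpr hx.isUnit

theorem tendsto_inv_of_tendsto_one [ContinuousInv₀ R] (hf : Tendsto f l (𝓝 1)) :
    Tendsto (fun x => (f x)⁻¹) l (𝓝 1) := by
  have hinv : ContinuousAt Inv.inv (1 : Matrix n n R) := by
    refine continuousAt_matrix_inv _ ?_
    rw [det_one, Ring.inverse_eq_inv']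
    exact continuousAt_inv₀ one_ne_zero
  have hinv := hinv.tendsto
  rw [inv_one] at hinv
  exact hinv.comp hf

end Matrix

theorem potential_recovery_general (N : ℕ)
    (J : Matrix (Fin N) (Fin N) ℂ)
    (ξ : ℂ → Matrix (Fin N) (Fin N) ℂ) (ξ₁ : Matrix (Fin N) (Fin N) ℂ)
    (h : Tendsto (fun lam : ℂ => lam • (ξ lam - 1)) (Bornology.cobounded ℂ) (nhds ξ₁)) :
    (∀ᶠ lam : ℂ in Bornology.cobounded ℂ, IsUnit (ξ lam)) ∧
    Tendsto (fun lam : ℂ => lam • (J - ξ lam * J * (ξ lam)⁻¹))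
      (Bornology.cobounded ℂ) (nhds (J * ξ₁ - ξ₁ * J)) := by
  have hξ := tendsto_of_tendsto_smul_sub h
  have hunit := eventually_isUnit_of_tendsto_one hξ
  refine ⟨hunit, ?_⟩
  have hlim : Tendsto (fun lam => (J * (lam • (ξ lam - 1)) - (lam • (ξ lam - 1)) * J) * (ξ lam)⁻¹)
      (Bornology.cobounded ℂ) (nhds ((J * ξ₁ - ξ₁ * J) * 1)) :=
    ((tendsto_const_nhds.mul h).sub (h.mul tendsto_const_nhds)).mul (tendsto_inv_of_tendsto_one hξ)
  rw [mul_one] at hlim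
  refine hlim.congr' ?_
  filter_upwards [hunit] with lam hlam
  exact (smul_sub_mul_mul_eq_commutator_mul lam
    (mul_nonsing_inv _ ((isUnit_iff_isUnit_det _).mp hlam)) J).symm

/-- If `λ (ξ(λ) − 1) → ξ₁` as `|λ| → ∞`, then `ξ(λ)` is invertible for all `λ`
of sufficiently large modulus and `λ (J − ξ(λ) J ξ(λ)⁻¹) → [J, ξ₁]`. -/
theorem potential_recovery (N : ℕ) (hN : 1 ≤ N)
    (J : Matrix (Fin N) (Fin N) ℂ)
    (ξ : ℂ → Matrix (Fin N) (Fin N) ℂ) (ξ₁ : Matrix (Fin N) (Fin N) ℂ)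
    (h : Tendsto (fun lam : ℂ => lam • (ξ lam - 1)) (Bornology.cobounded ℂ) (nhds ξ₁)) :
    (∀ᶠ lam : ℂ in Bornology.cobounded ℂ, IsUnit (ξ lam)) ∧
    Tendsto (fun lam : ℂ => lam • (J - ξ lam * J * (ξ lam)⁻¹))
      (Bornology.cobounded ℂ) (nhds (J * ξ₁ - ξ₁ * J)) :=
  potential_recovery_general N J ξ ξ₁ h
end

section
/- Let n be odd, let S₀ be the (n+2)×(n+2) complex matrix whose only nonzero entries are (S₀)_{s,n+3−s} = (−1)^{s+1}, and let T satisfy Tᵀ·S₀·T = S₀ with block form T = [[m₁⁺, −(b⁻)ᵀ, c₁⁻], [b⁺, T₂₂, −s₀B⁻], [c₁⁺, (B⁺)ᵀs₀, m₁⁻]] and m₁⁺ ≠ 0. Set ρ⁺ := b⁺/m₁⁺, τ⁺ := b⁻/m₁⁺, m₂⁺ := T₂₂ + (b⁺(b⁻)ᵀ)/m₁⁺. Then T admits the generalized Gauss decomposition T = T_J⁻ · D_J⁺ · Ŝ_J⁺, where T_J⁻ = [[1, 0, 0], [ρ⁺, 1ₙ, 0], [(ρ⁺)ᵀs₀ρ⁺/2,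 (ρ⁺)ᵀs₀, 1]], D_J⁺ = diag(m₁⁺, m₂⁺, 1/m₁⁺) (block diagonal), and Ŝ_J⁺ = [[1, −(τ⁺)ᵀ, (τ⁺)ᵀs₀τ⁺/2], [0, 1ₙ, −s₀τ⁺], [0, 0, 1]]. -/
open Matrix

/-- The `n×n` matrix `s₀` with `(s₀)_{s,n+1−s} = (−1)^{s+1}` (1-indexed). -/
def s0mat (n : ℕ) : Matrix (Fin n) (Fin n) ℂ :=
  Matrix.of fun i j => if (i : ℕ) + (j : ℕ) + 1 = n then (-1 : ℂ) ^ (i : ℕ) else 0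

/-- The position (0-indexed) of a `(1,n,1)`-block index inside `{0, …, n+1}`. -/
def blkIdx (n : ℕ) : Fin 1 ⊕ Fin n ⊕ Fin 1 → ℕ
  | .inl _ => 0
  | .inr (.inl k) => (k : ℕ) + 1
  | .inr (.inr _) => n + 1

/-- The `(n+2)×(n+2)` matrix `S₀` with `(S₀)_{s,n+3−s} = (−1)^{s+1}` (1-indexed), realized
on the `(1,n,1)`-block index type. -/
def S0big (n : ℕ) : Matrix (Fin 1 ⊕ Fin n ⊕ Fin 1) (Fin 1 ⊕ Fin n ⊕ Fin 1) ℂ :=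
  Matrix.of fun i j =>
    if blkIdx n i + blkIdx n j = n + 1 then (-1 : ℂ) ^ blkIdx n i else 0

/-- An `(n+2)×(n+2)` matrix given in `(1,n,1)` block form
`[[a, r₁ᵀ, b], [c₁, M, c₂], [c, r₂ᵀ, d]]`. -/
def blk3 (n : ℕ) (a : ℂ) (r₁ : Fin n → ℂ) (b : ℂ)
    (c₁ : Fin n → ℂ) (M : Matrix (Fin n) (Fin n) ℂ) (c₂ : Fin n → ℂ)
    (c : ℂ) (r₂ : Fin n → ℂ) (d : ℂ) :
    Matrix (Fin 1 ⊕ Fin n ⊕ Fin 1) (Fin 1 ⊕ Fin n ⊕ Fin 1) ℂ :=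
  Matrix.of fun i j =>
    match i, j with
    | .inl _, .inl _ => a
    | .inl _, .inr (.inl k) => r₁ k
    | .inl _, .inr (.inr _) => b
    | .inr (.inl k), .inl _ => c₁ k
    | .inr (.inl k), .inr (.inl l) => M k l
    | .inr (.inl k), .inr (.inr _) => c₂ k
    | .inr (.inr _), .inl _ => c
    | .inr (.inr _), .inr (.inl l) => r₂ l
    | .inr (.inr _), .inr (.inr _) => d

/-!
Since `S₀² = 1`, the orthogonality `Tᵀ S₀ T = S₀` also gives `T S₀ Tᵀ = S₀`. The `(1,1)` and
`(1,2)` blocks of the first identity and the `(1,1)`, `(1,3)`, `(2,1)` blocks of the second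
express `(b⁺)ᵀ s₀ b⁺`, `(b⁺)ᵀ s₀ T₂₂`, `(b⁻)ᵀ s₀ b⁻`, `T₂₂ s₀ b⁻` and `m₁⁻` through the remaining
blocks of `T`. Multiplying out `T_J⁻ D_J⁺ Ŝ_J⁺` block by block and substituting these relations
gives back `T`.
-/

theorem blk3_eq_blk3_iff {n : ℕ} {a a' b b' c c' d d' : ℂ}
    {r₁ r₁' c₁ c₁' c₂ c₂' r₂ r₂' : Fin n → ℂ} {M M' : Matrix (Fin n) (Fin n) ℂ} :
    blk3 n a r₁ b c₁ M c₂ c r₂ d = blk3 n a' r₁' b' c₁' M' c₂' c' r₂' d' ↔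
      a = a' ∧ r₁ = r₁' ∧ b = b' ∧ c₁ = c₁' ∧ M = M' ∧ c₂ = c₂' ∧ c = c' ∧ r₂ = r₂' ∧ d = d' := by
  refine ⟨fun h => ?_, fun h => by obtain ⟨rfl, rfl, rfl, rfl, rfl, rfl, rfl, rfl, rfl⟩ := h; rfl⟩
  have e := fun i j => congrFun (congrFun h i) j
  exact ⟨e (.inl 0) (.inl 0), funext fun l => e (.inl 0) (.inr (.inl l)),
    e (.inl 0) (.inr (.inr 0)), funext fun k => e (.inr (.inl k)) (.inl 0),
    funext fun k => funext fun l => e (.inr (.inl k)) (.inr (.inl l)),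
    funext fun k => e (.inr (.inl k)) (.inr (.inr 0)), e (.inr (.inr 0)) (.inl 0),
    funext fun l => e (.inr (.inr 0)) (.inr (.inl l)), e (.inr (.inr 0)) (.inr (.inr 0))⟩

theorem blk3_mul {n : ℕ} (a : ℂ) (r₁ : Fin n → ℂ) (b : ℂ)
    (c₁ : Fin n → ℂ) (M : Matrix (Fin n) (Fin n) ℂ) (c₂ : Fin n → ℂ)
    (c : ℂ) (r₂ : Fin n → ℂ) (d : ℂ)
    (a' : ℂ) (r₁' : Fin n → ℂ) (b' : ℂ)
    (c₁' : Fin n → ℂ) (M' : Matrix (Fin n) (Fin n) ℂ) (c₂' : Fin n → ℂ)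
    (c' : ℂ) (r₂' : Fin n → ℂ) (d' : ℂ) :
    blk3 n a r₁ b c₁ M c₂ c r₂ d * blk3 n a' r₁' b' c₁' M' c₂' c' r₂' d' =
      blk3 n (a * a' + r₁ ⬝ᵥ c₁' + b * c') (a • r₁' + r₁ ᵥ* M' + b • r₂')
        (a * b' + r₁ ⬝ᵥ c₂' + b * d')
        (a' • c₁ + M *ᵥ c₁' + c' • c₂) (vecMulVec c₁ r₁' + M * M' + vecMulVec c₂ r₂')
        (b' • c₁ + M *ᵥ c₂' + d' • c₂)
        (c * a' + r₂ ⬝ᵥ c₁' + d * c') (c • r₁' + r₂ ᵥ* M' + d • r₂')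
        (c * b' + r₂ ⬝ᵥ c₂' + d * d') := by
  ext i j
  rcases i with i | k | i <;> rcases j with j | l | j <;>
    simp only [blk3, of_apply, mul_apply, Fintype.sum_sum_type, Finset.univ_unique,
      Fin.default_eq_zero, Finset.sum_const, Finset.card_singleton, one_smul, dotProduct,
      Pi.add_apply, Pi.smul_apply, smul_eq_mul, vecMul, mulVec, Matrix.add_apply,
      vecMulVec_apply] <;> ring

theorem blk3_transpose {n : ℕ} (a : ℂ) (r₁ : Fin n → ℂ) (b : ℂ)
    (c₁ : Fin n → ℂ) (M : Matrix (Fin n) (Fin n) ℂ) (c₂ : Fin n → ℂ)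
    (c : ℂ) (r₂ : Fin n → ℂ) (d : ℂ) :
    (blk3 n a r₁ b c₁ M c₂ c r₂ d)ᵀ = blk3 n a c₁ c r₁ Mᵀ r₂ b c₂ d := by
  ext i j
  rcases i with i | k | i <;> rcases j with j | l | j <;> rfl

theorem one_eq_blk3 {n : ℕ} :
    (1 : Matrix (Fin 1 ⊕ Fin n ⊕ Fin 1) (Fin 1 ⊕ Fin n ⊕ Fin 1) ℂ) =
      blk3 n 1 0 0 0 1 0 0 0 1 := by
  ext i j
  rcases i with i | k | i <;> rcases j with j | l | j <;>
    simp [blk3, one_apply, eq_iff_true_of_subsingleton]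

theorem blk3_lower_mul_diag_mul_upper {n : ℕ} (m : ℂ) (M s : Matrix (Fin n) (Fin n) ℂ)
    (ρ τ : Fin n → ℂ) :
    blk3 n 1 0 0 ρ 1 0 (ρ ⬝ᵥ s *ᵥ ρ / 2) (ρ ᵥ* s) 1 * blk3 n m 0 0 0 M 0 0 0 m⁻¹ *
        blk3 n 1 (-τ) (τ ⬝ᵥ s *ᵥ τ / 2) 0 1 (-(s *ᵥ τ)) 0 0 1 =
      blk3 n m (-(m • τ)) (m * (τ ⬝ᵥ s *ᵥ τ) / 2)
        (m • ρ) (M - m • vecMulVec ρ τ) ((m * (τ ⬝ᵥ s *ᵥ τ) / 2) • ρ - M *ᵥ (s *ᵥ τ))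
        (m * (ρ ⬝ᵥ s *ᵥ ρ) / 2) (ρ ᵥ* s ᵥ* M - (m * (ρ ⬝ᵥ s *ᵥ ρ) / 2) • τ)
        (m * (ρ ⬝ᵥ s *ᵥ ρ) * (τ ⬝ᵥ s *ᵥ τ) / 4 - ρ ᵥ* s ᵥ* M ⬝ᵥ s *ᵥ τ + m⁻¹) := by
  rw [blk3_mul, blk3_mul]
  congr 1 <;> simp only [zero_add, add_zero, zero_mul, mul_zero, one_mul, mul_one, zero_smul,
    smul_zero, one_smul, smul_neg, neg_zero, dotProduct_zero, zero_dotProduct, dotProduct_neg,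
    zero_vecMul, vecMul_one, mulVec_zero, mulVec_neg, vecMulVec_zero, vecMulVec_neg,
    smul_vecMulVec] <;> first | module | ring

theorem even_of_add_one_eq_odd {n k : ℕ} (hn : Odd n) (h : k + 1 = n) : Even k :=
  Nat.not_odd_iff_even.mp (Nat.odd_add_one.mp (h ▸ hn))

theorem s0mat_transpose {n : ℕ} (hn : Odd n) : (s0mat n)ᵀ = s0mat n := by
  ext i j
  simp only [s0mat, transpose_apply, of_apply]
  split_ifs with h h' h'
  · exact neg_one_pow_congr (Nat.even_add.mp (even_of_add_one_eq_odd hn h))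
  · omega
  · omega
  · rfl

theorem s0mat_mul_self {n : ℕ} (hn : Odd n) : s0mat n * s0mat n = 1 := by
  ext i j
  rw [mul_apply, Finset.sum_eq_single ⟨n - 1 - i, by omega⟩]
  · simp only [s0mat, of_apply, one_apply, Fin.ext_iff]
    split_ifs with h₁ <;> try omega
    · rw [← pow_add]
      exact (even_of_add_one_eq_odd hn h₁).neg_one_pow
    all_goals simp
  · intro k _ hk
    simp only [s0mat, of_apply]
    rw [if_neg (fun h => hk (Fin.ext (by simp; omega))), zero_mul]
  · simp

theorem S0big_eq_blk3 {n : ℕ} (hn : Odd n) :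
    S0big n = blk3 n 0 0 1 0 (-(s0mat n)) 0 1 0 0 := by
  ext i j
  rcases i with i | k | i <;> rcases j with j | l | j <;>
    simp only [S0big, blk3, blkIdx, s0mat, of_apply, Matrix.neg_apply]
  case inr.inl.inr.inl =>
    simp only [show (k : ℕ) + 1 + (l + 1) = n + 1 ↔ (k : ℕ) + l + 1 = n by omega]
    split_ifs <;> simp [pow_succ]
  all_goals simp [(hn.add_odd odd_one).neg_one_pow] <;> omega

theorem S0big_mul_self {n : ℕ} (hn : Odd n) : S0big n * S0big n = 1 := by
  rw [S0big_eq_blk3 hn, blk3_mul, one_eq_blk3]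
  simp [s0mat_mul_self hn]

theorem Matrix.mul_mul_transpose_eq_of_transpose_mul_mul_eq {ι R : Type*} [Fintype ι]
    [DecidableEq ι] [CommRing R] {S T : Matrix ι ι R} (hS : S * S = 1) (h : Tᵀ * S * T = S) :
    T * S * Tᵀ = S := by
  have hleft : S * Tᵀ * S * T = 1 := by
    rw [show S * Tᵀ * S * T = S * (Tᵀ * S * T) by simp only [Matrix.mul_assoc], h, hS]
  calc T * S * Tᵀ = T * (S * Tᵀ * S) * S := by simp only [Matrix.mul_assoc, hS, Matrix.mul_one]
    _ = S := by rw [mul_eq_one_comm.mp hleft, Matrix.one_mul]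

/-- `T` in the block form of the theorem, with `s₀` replaced by an arbitrary `s`. -/
def scatteringBlock {n : ℕ} (s : Matrix (Fin n) (Fin n) ℂ) (m₁p m₁m c₁p c₁m : ℂ)
    (bp bm Bp Bm : Fin n → ℂ) (T₂₂ : Matrix (Fin n) (Fin n) ℂ) :
    Matrix (Fin 1 ⊕ Fin n ⊕ Fin 1) (Fin 1 ⊕ Fin n ⊕ Fin 1) ℂ :=
  blk3 n m₁p (-bm) c₁m bp T₂₂ (-(s *ᵥ Bm)) c₁p (Bp ᵥ* s) m₁m

section ScatteringBlock

variable {n : ℕ} {s T₂₂ : Matrix (Fin n) (Fin n) ℂ} {m₁p m₁m c₁p c₁m : ℂ}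
  {bp bm Bp Bm : Fin n → ℂ}

theorem scatteringBlock_relations_of_transpose_mul_mul
    (h : (scatteringBlock s m₁p m₁m c₁p c₁m bp bm Bp Bm T₂₂)ᵀ * blk3 n 0 0 1 0 (-s) 0 1 0 0 *
      scatteringBlock s m₁p m₁m c₁p c₁m bp bm Bp Bm T₂₂ = blk3 n 0 0 1 0 (-s) 0 1 0 0) :
    bp ⬝ᵥ s *ᵥ bp = 2 * (m₁p * c₁p) ∧ bp ᵥ* s ᵥ* T₂₂ = m₁p • (Bp ᵥ* s) - c₁p • bm := by
  rw [scatteringBlock, blk3_transpose, blk3_mul, blk3_mul, blk3_eq_blk3_iff] at h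
  obtain ⟨h₁₁, h₁₂, -⟩ := h
  simp only [mul_zero, dotProduct_zero, add_zero, mul_one, zero_add, smul_zero, vecMul_neg,
    neg_vecMul, neg_dotProduct, smul_neg] at h₁₁ h₁₂
  rw [dotProduct_mulVec]
  exact ⟨by linear_combination -h₁₁, by linear_combination (norm := module) -h₁₂⟩

theorem scatteringBlock_relations_of_mul_mul_transpose
    (h : scatteringBlock s m₁p m₁m c₁p c₁m bp bm Bp Bm T₂₂ * blk3 n 0 0 1 0 (-s) 0 1 0 0 *
      (scatteringBlock s m₁p m₁m c₁p c₁m bp bm Bp Bm T₂₂)ᵀ = blk3 n 0 0 1 0 (-s) 0 1 0 0) :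
    bm ⬝ᵥ s *ᵥ bm = 2 * (m₁p * c₁m) ∧ T₂₂ *ᵥ (s *ᵥ bm) = m₁p • (s *ᵥ Bm) - c₁m • bp ∧
      c₁m * c₁p + bm ᵥ* s ⬝ᵥ Bp ᵥ* s + m₁p * m₁m = 1 := by
  rw [scatteringBlock, blk3_transpose, blk3_mul, blk3_mul, blk3_eq_blk3_iff] at h
  obtain ⟨h₁₁, -, h₁₃, h₂₁, -⟩ := h
  simp only [mul_zero, dotProduct_zero, add_zero, mul_one, zero_add, smul_zero, vecMul_neg,
    neg_vecMul, neg_neg, dotProduct_neg, zero_smul, mulVec_zero, smul_neg, one_smul,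
    vecMulVec_zero, mul_neg, mulVec_neg, neg_mulVec, ← mulVec_mulVec, neg_zero] at h₁₁ h₁₃ h₂₁
  rw [dotProduct_mulVec]
  exact ⟨by linear_combination -h₁₁, by linear_combination (norm := module) h₂₁, h₁₃⟩

theorem scatteringBlock_eq_of_relations (hs : sᵀ = s) (hm : m₁p ≠ 0)
    (hρρ : bp ⬝ᵥ s *ᵥ bp = 2 * (m₁p * c₁p))
    (hρT : bp ᵥ* s ᵥ* T₂₂ = m₁p • (Bp ᵥ* s) - c₁p • bm)
    (hττ : bm ⬝ᵥ s *ᵥ bm = 2 * (m₁p * c₁m))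
    (hTτ : T₂₂ *ᵥ (s *ᵥ bm) = m₁p • (s *ᵥ Bm) - c₁m • bp)
    (hdet : c₁m * c₁p + bm ᵥ* s ⬝ᵥ Bp ᵥ* s + m₁p * m₁m = 1) :
    let ρ := fun k => bp k / m₁p
    let τ := fun k => bm k / m₁p
    let M := T₂₂ + m₁p⁻¹ • vecMulVec bp bm
    scatteringBlock s m₁p m₁m c₁p c₁m bp bm Bp Bm T₂₂ =
      blk3 n m₁p (-(m₁p • τ)) (m₁p * (τ ⬝ᵥ s *ᵥ τ) / 2)
        (m₁p • ρ) (M - m₁p • vecMulVec ρ τ) ((m₁p * (τ ⬝ᵥ s *ᵥ τ) / 2) • ρ - M *ᵥ (s *ᵥ τ))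
        (m₁p * (ρ ⬝ᵥ s *ᵥ ρ) / 2) (ρ ᵥ* s ᵥ* M - (m₁p * (ρ ⬝ᵥ s *ᵥ ρ) / 2) • τ)
        (m₁p * (ρ ⬝ᵥ s *ᵥ ρ) * (τ ⬝ᵥ s *ᵥ τ) / 4 - ρ ᵥ* s ᵥ* M ⬝ᵥ s *ᵥ τ + m₁p⁻¹) := by
  intro ρ τ M
  have hρ : ρ = m₁p⁻¹ • bp := funext fun k => div_eq_inv_mul _ _
  have hτ : τ = m₁p⁻¹ • bm := funext fun k => div_eq_inv_mul _ _
  have hsym : bm ᵥ* s = s *ᵥ bm := by rw [← vecMul_transpose, hs]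
  rw [hsym, dotProduct_comm, ← dotProduct_mulVec] at hdet
  rw [scatteringBlock]
  congr 1 <;> simp only [M, hρ, hτ, hρρ, hττ, hρT, hTτ, ne_eq, hm, not_false_eq_true, smul_smul,
    mul_inv_cancel₀, mul_inv_cancel_left₀, one_smul, smul_eq_mul, mulVec_smul, smul_mulVec,
    add_mulVec, vecMul_smul, smul_vecMul, vecMul_add, dotProduct_smul, smul_dotProduct,
    ← dotProduct_mulVec, add_dotProduct, sub_dotProduct, vecMulVec_smul, smul_vecMulVec,
    vecMulVec_mulVec, vecMul_vecMulVec, op_smul_eq_smul, smul_add, add_sub_cancel_right]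
  case e_b | e_c => field_simp
  case e_c₂ | e_r₂ => match_scalars <;> grind
  case e_d =>
    field_simp
    linear_combination 4 * hdet

end ScatteringBlock

/-- the generalized Gauss decomposition `T = T_J⁻ · D_J⁺ · Ŝ_J⁺` of an
`S₀`-orthogonal scattering matrix with `m₁⁺ ≠ 0`. -/
theorem gauss_decomposition_plus (n : ℕ) (hn : Odd n)
    (m₁p m₁m c₁p c₁m : ℂ) (bp bm Bp Bm : Fin n → ℂ)
    (T₂₂ : Matrix (Fin n) (Fin n) ℂ)
    (hT :
      (blk3 n m₁p (fun k => -(bm k)) c₁m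
        bp T₂₂ (fun k => -((s0mat n *ᵥ Bm) k))
        c₁p (Bp ᵥ* s0mat n) m₁m)ᵀ * S0big n *
      blk3 n m₁p (fun k => -(bm k)) c₁m
        bp T₂₂ (fun k => -((s0mat n *ᵥ Bm) k))
        c₁p (Bp ᵥ* s0mat n) m₁m = S0big n)
    (hm : m₁p ≠ 0) :
    blk3 n m₁p (fun k => -(bm k)) c₁m
        bp T₂₂ (fun k => -((s0mat n *ᵥ Bm) k))
        c₁p (Bp ᵥ* s0mat n) m₁m
      =
      blk3 n 1 0 0
          (fun k => bp k / m₁p) 1 0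
          (((fun k => bp k / m₁p) ⬝ᵥ s0mat n *ᵥ fun k => bp k / m₁p) / 2)
          ((fun k => bp k / m₁p) ᵥ* s0mat n) 1 *
      blk3 n m₁p 0 0
          0 (T₂₂ + m₁p⁻¹ • vecMulVec bp bm) 0
          0 0 m₁p⁻¹ *
      blk3 n 1 (fun k => -(bm k / m₁p))
          (((fun k => bm k / m₁p) ⬝ᵥ s0mat n *ᵥ fun k => bm k / m₁p) / 2)
          0 1 (fun k => -((s0mat n *ᵥ fun l => bm l / m₁p) k))
          0 0 1 := by
  change (scatteringBlock (s0mat n) m₁p m₁m c₁p c₁m bp bm Bp Bm T₂₂)ᵀ * S0big n *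
    scatteringBlock (s0mat n) m₁p m₁m c₁p c₁m bp bm Bp Bm T₂₂ = S0big n at hT
  have hT' := mul_mul_transpose_eq_of_transpose_mul_mul_eq (S0big_mul_self hn) hT
  rw [S0big_eq_blk3 hn] at hT hT'
  obtain ⟨hρρ, hρT⟩ := scatteringBlock_relations_of_transpose_mul_mul hT
  obtain ⟨hττ, hTτ, hdet⟩ := scatteringBlock_relations_of_mul_mul_transpose hT'
  exact (scatteringBlock_eq_of_relations (s0mat_transpose hn) hm hρρ hρT hττ hTτ hdet).trans
    (blk3_lower_mul_diag_mul_upper _ _ _ _ _).symm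
end
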